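/- arXiv:1107.1466 — 2 statements merged into one kernel-verified Lean document; each statement's English description precedes it below -/
import Mathlib

section
/- Let N ≥ 2, let n₀, k ∈ ℝ, ρ > 0, and a ∈ EuclideanSpace ℝ (Fin N). Let V ⊆ EuclideanSpace ℝ (Fin N) be open and let Ψ be twice continuously differentiable on V with Δ Ψ(y) + (4 n₀² k² ρ⁴/(‖y‖² + ρ²)²) · Ψ(y) = 0 for all y ∈ V. Define I_a(r) = ((ρ² + ‖a‖²)/‖r − a‖²)·(r − a) + a and Φ(r) = ‖r − a‖^{−(N−2)} · Ψ(I_a(r)). Then for every r ≠ a with I_a(r) ∈ V one has Δ Φ(r) + (4 n₀² k² ρ⁴/(‖r‖² + ρ²)²) · Φ(r) = 0. -/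
/-- The Laplacian of a real-valued function on `EuclideanSpace ℝ (Fin N)`:
the sum of the second partial derivatives, i.e. the trace of the second
Fréchet derivative. -/
noncomputable def laplacian {N : ℕ} (f : EuclideanSpace ℝ (Fin N) → ℝ)
    (x : EuclideanSpace ℝ (Fin N)) : ℝ :=
  ∑ i : Fin N,
    iteratedFDeriv ℝ 2 f x ![EuclideanSpace.single i 1, EuclideanSpace.single i 1]

/-!
`I_a` is the inversion in the sphere of radius `R = √(ρ² + ‖a‖²)` about `a`, and `Φ` is the
Kelvin transform `‖r - a‖^(2-N) Ψ(I_a r)` of `Ψ`. The Kelvin transform satisfies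
`Δ Φ (r) = (R / ‖r - a‖)^4 ‖r - a‖^(2-N) (Δ Ψ)(I_a r)`: the derivative of `I_a` is
`(R / ‖r - a‖)²` times a reflection, so the second-order part of `Δ (Ψ ∘ I_a)` is that factor
squared times `Δ Ψ`; the weight `‖r - a‖^(2-N)` is harmonic; and the two first-order terms, one
from `Δ I_a` and one from the cross term of the product rule, cancel.

The inversion sphere meets the "imaginary sphere" `‖y‖² = -ρ²` orthogonally, which is the
identity `‖I_a r‖² + ρ² = (R / ‖r - a‖)² (‖r‖² + ρ²)`. Hence the fish-eye potential
`4 n₀² k² ρ⁴ / (‖y‖² + ρ²)²` picks up the same factor `(R / ‖r - a‖)^4` under `I_a`, and the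
wave equation for `Ψ` at `I_a r` becomes the one for `Φ` at `r`.
-/

open Filter Topology EuclideanGeometry
open scoped Laplacian Gradient RealInnerProductSpace

section SecondDerivative

variable {E F G : Type*} [NormedAddCommGroup E] [NormedSpace ℝ E]
  [NormedAddCommGroup F] [NormedSpace ℝ F] [NormedAddCommGroup G] [NormedSpace ℝ G]

theorem ContDiffAt.differentiableAt_fderiv {f : E → F} {x : E} (hf : ContDiffAt ℝ 2 f x) :
    DifferentiableAt ℝ (fderiv ℝ f) x :=
  (hf.fderiv_right (m := 1) le_rfl).differentiableAt one_ne_zero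

theorem ContDiffAt.eventually_differentiableAt {f : E → F} {x : E} (hf : ContDiffAt ℝ 2 f x) :
    ∀ᶠ y in 𝓝 x, DifferentiableAt ℝ f y :=
  (hf.eventually (by simp)).mono fun _ hy => hy.differentiableAt two_ne_zero

theorem fderiv_fderiv_apply {f : E → F} {x : E} (hf : DifferentiableAt ℝ (fderiv ℝ f) x)
    (v w : E) : fderiv ℝ (fderiv ℝ f) x v w = fderiv ℝ (fun y => fderiv ℝ f y w) x v := by
  simp [fderiv_clm_apply hf (differentiableAt_const w)]

theorem fderiv_fderiv_comp_apply {g : F → G} {f : E → F} {x : E}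
    (hg : ContDiffAt ℝ 2 g (f x)) (hf : ContDiffAt ℝ 2 f x) (v w : E) :
    fderiv ℝ (fderiv ℝ (g ∘ f)) x v w =
      fderiv ℝ (fderiv ℝ g) (f x) (fderiv ℝ f x v) (fderiv ℝ f x w) +
        fderiv ℝ g (f x) (fderiv ℝ (fderiv ℝ f) x v w) := by
  have hfg : fderiv ℝ (g ∘ f) =ᶠ[𝓝 x] fun y => (fderiv ℝ g (f y)).comp (fderiv ℝ f y) := by
    filter_upwards [hf.continuousAt.eventually hg.eventually_differentiableAt,
      hf.eventually_differentiableAt] with y hgy hfy using fderiv_comp y hgy hfy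
  have hg' : HasFDerivAt (fun y => fderiv ℝ g (f y))
      ((fderiv ℝ (fderiv ℝ g) (f x)).comp (fderiv ℝ f x)) x :=
    hg.differentiableAt_fderiv.hasFDerivAt.comp x (hf.differentiableAt two_ne_zero).hasFDerivAt
  rw [hfg.fderiv_eq, (hg'.clm_comp hf.differentiableAt_fderiv.hasFDerivAt).fderiv]
  simp [add_comm]

theorem fderiv_fderiv_smul_apply {c : E → ℝ} {h : E → F} {x : E}
    (hc : ContDiffAt ℝ 2 c x) (hh : ContDiffAt ℝ 2 h x) (v w : E) :
    fderiv ℝ (fderiv ℝ fun y => c y • h y) x v w =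
      c x • fderiv ℝ (fderiv ℝ h) x v w + fderiv ℝ c x v • fderiv ℝ h x w +
        fderiv ℝ c x w • fderiv ℝ h x v + fderiv ℝ (fderiv ℝ c) x v w • h x := by
  have hch : (fun y => fderiv ℝ (fun y => c y • h y) y w) =ᶠ[𝓝 x]
      fun y => c y • fderiv ℝ h y w + fderiv ℝ c y w • h y := by
    filter_upwards [hc.eventually_differentiableAt, hh.eventually_differentiableAt]
      with y hcy hhy
    simp [fderiv_fun_smul hcy hhy]
  have hD := ((hc.differentiableAt two_ne_zero).hasFDerivAt.fun_smul
    (hh.differentiableAt_fderiv.hasFDerivAt.clm_apply (hasFDerivAt_const w x))).fun_add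
    ((hc.differentiableAt_fderiv.hasFDerivAt.clm_apply (hasFDerivAt_const w x)).fun_smul
      (hh.differentiableAt two_ne_zero).hasFDerivAt)
  rw [fderiv_fderiv_apply (hc.fun_smul hh).differentiableAt_fderiv, hch.fderiv_eq, hD.fderiv]
  simp only [ContinuousLinearMap.comp_zero, zero_add, add_apply, smul_apply,
    ContinuousLinearMap.flip_apply, ContinuousLinearMap.smulRight_apply]
  abel

end SecondDerivative

section Laplacian

variable {E E' F : Type*} [NormedAddCommGroup E] [InnerProductSpace ℝ E] [FiniteDimensional ℝ E]
  [NormedAddCommGroup E'] [InnerProductSpace ℝ E'] [FiniteDimensional ℝ E']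
  [NormedAddCommGroup F] [NormedSpace ℝ F]

theorem laplacian_eq_sum_fderiv_fderiv {ι : Type*} [Fintype ι] (b : OrthonormalBasis ι ℝ E)
    (f : E → F) (x : E) : Δ f x = ∑ i, fderiv ℝ (fderiv ℝ f) x (b i) (b i) := by
  simp [InnerProductSpace.laplacian_eq_iteratedFDeriv_orthonormalBasis f b,
    iteratedFDeriv_two_apply]

theorem ContDiffAt.laplacian_fun_smul {c : E → ℝ} {h : E → F} {x : E}
    (hc : ContDiffAt ℝ 2 c x) (hh : ContDiffAt ℝ 2 h x) :
    Δ (fun y => c y • h y) x = c x • Δ h x + (2 : ℝ) • fderiv ℝ h x (∇ c x) + Δ c x • h x := by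
  let b := stdOrthonormalBasis ℝ E
  have hgrad : ∑ i, fderiv ℝ c x (b i) • fderiv ℝ h x (b i) = fderiv ℝ h x (∇ c x) := by
    conv_rhs => rw [← b.sum_repr' (∇ c x)]
    simp only [map_sum, map_smul, gradient, real_inner_comm _ (b _),
      InnerProductSpace.toDual_symm_apply]
  simp only [laplacian_eq_sum_fderiv_fderiv b, fderiv_fderiv_smul_apply hc hh, ← hgrad,
    Finset.sum_add_distrib, ← Finset.smul_sum, ← Finset.sum_smul]
  rw [two_smul]
  abel

theorem ContDiffAt.laplacian_comp_of_fderiv_eq_smul {g : E' → F} {f : E → E'} {x : E}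
    (hg : ContDiffAt ℝ 2 g (f x)) (hf : ContDiffAt ℝ 2 f x) {μ : ℝ} {L : E ≃ₗᵢ[ℝ] E'}
    (hfx : fderiv ℝ f x = μ • (L : E →L[ℝ] E')) :
    Δ (g ∘ f) x = μ ^ 2 • Δ g (f x) + fderiv ℝ g (f x) (Δ f x) := by
  let b := stdOrthonormalBasis ℝ E
  simp only [laplacian_eq_sum_fderiv_fderiv b, laplacian_eq_sum_fderiv_fderiv (b.map L),
    fderiv_fderiv_comp_apply hg hf, hfx, Finset.sum_add_distrib, map_sum, Finset.smul_sum]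
  simp [pow_two, smul_smul]

end Laplacian

section DistPow

variable {E : Type*} [NormedAddCommGroup E] [InnerProductSpace ℝ E] {a x : E}

theorem contDiffAt_norm_sub_rpow {n : WithTop ℕ∞} (hx : x ≠ a) (s : ℝ) :
    ContDiffAt ℝ n (fun y => ‖y - a‖ ^ s) x :=
  ((contDiffAt_norm ℝ (sub_ne_zero.2 hx)).comp x
    (contDiffAt_id.sub contDiffAt_const)).rpow_const_of_ne (norm_ne_zero_iff.2 (sub_ne_zero.2 hx))

theorem hasFDerivAt_norm_sub_rpow (hx : x ≠ a) (s : ℝ) :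
    HasFDerivAt (fun y => ‖y - a‖ ^ s) ((s * ‖x - a‖ ^ (s - 2)) • innerSL ℝ (x - a)) x := by
  have hpos : 0 < ‖x - a‖ := norm_pos_iff.2 (sub_ne_zero.2 hx)
  have hsq := (((hasFDerivAt_id x).sub_const a).norm_sq).rpow_const (p := s / 2)
    (Or.inl (by positivity))
  have hfun : (fun y => ‖y - a‖ ^ s) = fun y => (‖y - a‖ ^ 2) ^ (s / 2) := by
    ext y
    rw [← Real.rpow_natCast_mul (norm_nonneg _)]
    ring_nf
  rw [hfun]
  refine hsq.congr_fderiv ?_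
  ext v
  simp only [id, ← Real.rpow_natCast_mul hpos.le, Nat.cast_ofNat, map_sub,
    ContinuousLinearMap.comp_id, smul_apply, sub_apply, coe_innerSL_apply, nsmul_eq_mul, smul_eq_mul]
  ring_nf

theorem hasGradientAt_norm_sub_rpow [CompleteSpace E] (hx : x ≠ a) (s : ℝ) :
    HasGradientAt (fun y => ‖y - a‖ ^ s) ((s * ‖x - a‖ ^ (s - 2)) • (x - a)) x := by
  rw [hasGradientAt_iff_hasFDerivAt, map_smul]
  exact hasFDerivAt_norm_sub_rpow hx s

theorem fderiv_fderiv_norm_sub_rpow_apply (hx : x ≠ a) (s : ℝ) (v w : E) :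
    fderiv ℝ (fderiv ℝ fun y => ‖y - a‖ ^ s) x v w =
      s * ‖x - a‖ ^ (s - 2) * ⟪v, w⟫ +
        s * (s - 2) * ‖x - a‖ ^ (s - 4) * (⟪x - a, v⟫ * ⟪x - a, w⟫) := by
  have hD : fderiv ℝ (fun y => ‖y - a‖ ^ s) =ᶠ[𝓝 x]
      fun y => (s * ‖y - a‖ ^ (s - 2)) • innerSL ℝ (y - a) := by
    filter_upwards [isOpen_ne.mem_nhds hx] with y hy using (hasFDerivAt_norm_sub_rpow hy s).fderiv
  have hD2 : HasFDerivAt (fun y => (s * ‖y - a‖ ^ (s - 2)) • innerSL ℝ (y - a)) _ x :=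
    ((hasFDerivAt_norm_sub_rpow hx (s - 2)).const_mul s).fun_smul
      ((innerSL ℝ).hasFDerivAt.comp x ((hasFDerivAt_id x).sub_const a))
  rw [hD.fderiv_eq, hD2.fderiv]
  simp only [add_apply, FunLike.coe_smul, Pi.smul_apply, ContinuousLinearMap.comp_apply,
    ContinuousLinearMap.smulRight_apply, ContinuousLinearMap.id_apply, innerSL_apply_apply,
    smul_eq_mul]
  rw [innerSL_apply_apply]
  ring_nf

theorem laplacian_norm_sub_rpow [FiniteDimensional ℝ E] (hx : x ≠ a) (s : ℝ) :
    Δ (fun y => ‖y - a‖ ^ s) x = s * (s + Module.finrank ℝ E - 2) * ‖x - a‖ ^ (s - 2) := by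
  have hpow : ‖x - a‖ ^ (s - 4) * ‖x - a‖ ^ 2 = ‖x - a‖ ^ (s - 2) := by
    rw [← Real.rpow_natCast, ← Real.rpow_add (norm_pos_iff.2 (sub_ne_zero.2 hx))]
    ring_nf
  let b := stdOrthonormalBasis ℝ E
  simp only [laplacian_eq_sum_fderiv_fderiv b, fderiv_fderiv_norm_sub_rpow_apply hx,
    b.inner_eq_one, ← sq, Finset.sum_add_distrib, ← Finset.mul_sum, b.sum_sq_inner_left,
    Finset.sum_const, Finset.card_univ, Fintype.card_fin, nsmul_eq_mul]
  linear_combination s * (s - 2) * hpow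

end DistPow

section Inversion

variable {E : Type*} [NormedAddCommGroup E] [InnerProductSpace ℝ E]

theorem inversion_eq_smul_rpow (a : E) (R : ℝ) :
    inversion a R = fun y => R ^ 2 • (‖y - a‖ ^ (-2 : ℝ) • (y - a)) + a := by
  ext1 y
  rcases eq_or_ne y a with rfl | hy
  · simp
  rw [inversion, dist_eq_norm, vsub_eq_sub, vadd_eq_add, smul_smul, div_pow, Real.rpow_neg
    (norm_nonneg _), Real.rpow_two, div_eq_mul_inv]

theorem laplacian_sub_const [FiniteDimensional ℝ E] (a x : E) : Δ (fun y => y - a) x = 0 := by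
  have hD : fderiv ℝ (fun y : E => y - a) = fun _ => ContinuousLinearMap.id ℝ E :=
    funext fun y => ((hasFDerivAt_id y).sub_const a).fderiv
  simp [laplacian_eq_sum_fderiv_fderiv (stdOrthonormalBasis ℝ E), hD]

theorem laplacian_inversion [FiniteDimensional ℝ E] {a x : E} (hx : x ≠ a) (R : ℝ) :
    Δ (inversion a R) x =
      (2 * (2 - Module.finrank ℝ E) * R ^ 2 * ‖x - a‖ ^ (-4 : ℝ)) • (x - a) := by
  have hp : ContDiffAt ℝ 2 (fun y => ‖y - a‖ ^ (-2 : ℝ)) x := contDiffAt_norm_sub_rpow hx _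
  have hh : ContDiffAt ℝ 2 (fun y : E => y - a) x := contDiffAt_id.sub contDiffAt_const
  have hD : fderiv ℝ (fun y : E => y - a) x = ContinuousLinearMap.id ℝ E :=
    ((hasFDerivAt_id x).sub_const a).fderiv
  set g : E → E := fun y => ‖y - a‖ ^ (-2 : ℝ) • (y - a)
  have hg : ContDiffAt ℝ 2 g x := hp.fun_smul hh
  have hRg : ContDiffAt ℝ 2 (R ^ 2 • g) x := hg.const_smul _
  have hI : inversion a R = R ^ 2 • g + fun _ => a := by
    rw [inversion_eq_smul_rpow]
    rfl
  rw [hI, hRg.laplacian_add contDiffAt_const, InnerProductSpace.laplacian_const,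
    InnerProductSpace.laplacian_smul _ hg, hp.laplacian_fun_smul hh, laplacian_sub_const,
    (hasGradientAt_norm_sub_rpow hx _).gradient, laplacian_norm_sub_rpow hx, hD]
  simp only [smul_zero, zero_add, Pi.zero_apply, add_zero, ContinuousLinearMap.id_apply,
    smul_smul, ← add_smul]
  ring_nf

end Inversion

section Kelvin

variable {E F : Type*} [NormedAddCommGroup E] [InnerProductSpace ℝ E] [FiniteDimensional ℝ E]
  [NormedAddCommGroup F] [NormedSpace ℝ F]

noncomputable def kelvinTransform (a : E) (R : ℝ) (Ψ : E → F) (y : E) : F :=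
  ‖y - a‖ ^ (2 - Module.finrank ℝ E : ℝ) • Ψ (inversion a R y)

theorem laplacian_kelvinTransform {a x : E} (hx : x ≠ a) (R : ℝ) {Ψ : E → F}
    (hΨ : ContDiffAt ℝ 2 Ψ (inversion a R x)) :
    Δ (kelvinTransform a R Ψ) x =
      (‖x - a‖ ^ (2 - Module.finrank ℝ E : ℝ) * (R / ‖x - a‖) ^ 4) • Δ Ψ (inversion a R x) := by
  set s : ℝ := 2 - Module.finrank ℝ E with hs
  have hpos : 0 < ‖x - a‖ := norm_pos_iff.2 (sub_ne_zero.2 hx)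
  have hp : ContDiffAt ℝ 2 (fun y => ‖y - a‖ ^ s) x := contDiffAt_norm_sub_rpow hx s
  have hI : ContDiffAt ℝ 2 (inversion a R) x :=
    contDiffAt_const.inversion contDiffAt_const contDiffAt_id hx
  have hDI := (hasFDerivAt_inversion (R := R) hx).fderiv
  have hcancel : ‖x - a‖ ^ s * (2 * (2 - Module.finrank ℝ E) * R ^ 2 * ‖x - a‖ ^ (-4 : ℝ)) =
      2 * (R / ‖x - a‖) ^ 2 * (s * ‖x - a‖ ^ (s - 2)) := by
    have hpow : ‖x - a‖ ^ (s - 2) = ‖x - a‖ ^ s * ‖x - a‖ ^ (-4 : ℝ) * ‖x - a‖ ^ 2 := by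
      rw [← Real.rpow_add hpos, ← Real.rpow_natCast, ← Real.rpow_add hpos]
      ring_nf
    rw [hpow, ← hs]
    field_simp
  change Δ (fun y => ‖y - a‖ ^ s • (Ψ ∘ inversion a R) y) x = _
  rw [hp.laplacian_fun_smul (hΨ.comp x hI), hΨ.laplacian_comp_of_fderiv_eq_smul hI hDI,
    laplacian_norm_sub_rpow hx, laplacian_inversion hx,
    (hasGradientAt_norm_sub_rpow hx s).gradient,
    fderiv_comp x (hΨ.differentiableAt two_ne_zero) (hI.differentiableAt two_ne_zero), hDI]
  simp only [ContinuousLinearMap.comp_apply, FunLike.coe_smul, Pi.smul_apply,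
    LinearIsometryEquiv.coe_coe'', map_smul, map_neg, dist_eq_norm,
    Submodule.reflection_orthogonalComplement_singleton_eq_neg]
  have hharm : s * (s + Module.finrank ℝ E - 2) * ‖x - a‖ ^ (s - 2) = 0 := by
    rw [hs]; ring
  linear_combination (norm := module) hcancel • fderiv ℝ Ψ (inversion a R x) (x - a) +
    hharm • (Ψ ∘ inversion a R) x

end Kelvin

theorem norm_inversion_sq_add_sq {E : Type*} [NormedAddCommGroup E] [InnerProductSpace ℝ E]
    {a x : E} (hx : x ≠ a) {R ρ : ℝ} (hR : R ^ 2 = ρ ^ 2 + ‖a‖ ^ 2) :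
    ‖inversion a R x‖ ^ 2 + ρ ^ 2 = (R / ‖x - a‖) ^ 2 * (‖x‖ ^ 2 + ρ ^ 2) := by
  have hu : ‖x - a‖ ≠ 0 := norm_ne_zero_iff.2 (sub_ne_zero.2 hx)
  have hx' : ‖x‖ ^ 2 = ‖x - a‖ ^ 2 + 2 * ⟪x - a, a⟫ + ‖a‖ ^ 2 := by
    rw [← norm_add_sq_real, sub_add_cancel]
  rw [inversion, dist_eq_norm, vsub_eq_sub, vadd_eq_add, norm_add_sq_real, norm_smul,
    real_inner_smul_left, hx', Real.norm_eq_abs, abs_of_nonneg (by positivity)]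
  field_simp
  linear_combination (R ^ 2 - ‖x - a‖ ^ 2) * hR

theorem laplacian_eq_innerProductSpace_laplacian {N : ℕ} (f : EuclideanSpace ℝ (Fin N) → ℝ)
    (x : EuclideanSpace ℝ (Fin N)) : laplacian f x = Δ f x := by
  simp [laplacian, InnerProductSpace.laplacian_eq_iteratedFDeriv_orthonormalBasis f
    (EuclideanSpace.basisFun (Fin N) ℝ)]

theorem fisheye_equation_inversion_invariance_general
    {N : ℕ} (n₀ k ρ : ℝ) (hρ : 0 < ρ)
    (a : EuclideanSpace ℝ (Fin N))
    (V : Set (EuclideanSpace ℝ (Fin N))) (hV : IsOpen V)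
    (Ψ : EuclideanSpace ℝ (Fin N) → ℝ) (hΨ : ContDiffOn ℝ 2 Ψ V)
    (hwave : ∀ y ∈ V,
      laplacian Ψ y + (4 * n₀ ^ 2 * k ^ 2 * ρ ^ 4 / (‖y‖ ^ 2 + ρ ^ 2) ^ 2) * Ψ y = 0)
    (Ia : EuclideanSpace ℝ (Fin N) → EuclideanSpace ℝ (Fin N))
    (hIa : Ia = fun r => ((ρ ^ 2 + ‖a‖ ^ 2) / ‖r - a‖ ^ 2) • (r - a) + a)
    (Φ : EuclideanSpace ℝ (Fin N) → ℝ)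
    (hΦ : Φ = fun r => ‖r - a‖ ^ (-((N : ℝ) - 2)) * Ψ (Ia r)) :
    ∀ r : EuclideanSpace ℝ (Fin N), r ≠ a → Ia r ∈ V →
      laplacian Φ r + (4 * n₀ ^ 2 * k ^ 2 * ρ ^ 4 / (‖r‖ ^ 2 + ρ ^ 2) ^ 2) * Φ r = 0 := by
  intro r hra hrV
  set R := √(ρ ^ 2 + ‖a‖ ^ 2)
  have hR : R ^ 2 = ρ ^ 2 + ‖a‖ ^ 2 := Real.sq_sqrt (by positivity)
  have hIa' : Ia = inversion a R := by
    rw [hIa, ← hR]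
    ext1 y
    simp [inversion, dist_eq_norm, div_pow]
  have hΦ' : Φ = kelvinTransform a R Ψ := by
    rw [hΦ, hIa']
    ext1 y
    simp [kelvinTransform, neg_sub]
  rw [hIa'] at hrV
  have hw := hwave _ hrV
  rw [laplacian_eq_innerProductSpace_laplacian, norm_inversion_sq_add_sq hra hR] at hw
  rw [laplacian_eq_innerProductSpace_laplacian, hΦ',
    laplacian_kelvinTransform hra R (hΨ.contDiffAt (hV.mem_nhds hrV)),
    eq_neg_of_add_eq_zero_left hw, kelvinTransform, smul_eq_mul, smul_eq_mul]
  have hR0 : R ≠ 0 := (Real.sqrt_pos.2 (by positivity)).ne'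
  have hu : ‖r - a‖ ≠ 0 := norm_ne_zero_iff.2 (sub_ne_zero.2 hra)
  field_simp
  ring

theorem fisheye_equation_inversion_invariance
    {N : ℕ} (hN : 2 ≤ N) (n₀ k ρ : ℝ) (hρ : 0 < ρ)
    (a : EuclideanSpace ℝ (Fin N))
    (V : Set (EuclideanSpace ℝ (Fin N))) (hV : IsOpen V)
    (Ψ : EuclideanSpace ℝ (Fin N) → ℝ) (hΨ : ContDiffOn ℝ 2 Ψ V)
    (hwave : ∀ y ∈ V,
      laplacian Ψ y + (4 * n₀ ^ 2 * k ^ 2 * ρ ^ 4 / (‖y‖ ^ 2 + ρ ^ 2) ^ 2) * Ψ y = 0)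
    (Ia : EuclideanSpace ℝ (Fin N) → EuclideanSpace ℝ (Fin N))
    (hIa : Ia = fun r => ((ρ ^ 2 + ‖a‖ ^ 2) / ‖r - a‖ ^ 2) • (r - a) + a)
    (Φ : EuclideanSpace ℝ (Fin N) → ℝ)
    (hΦ : Φ = fun r => ‖r - a‖ ^ (-((N : ℝ) - 2)) * Ψ (Ia r)) :
    ∀ r : EuclideanSpace ℝ (Fin N), r ≠ a → Ia r ∈ V →
      laplacian Φ r + (4 * n₀ ^ 2 * k ^ 2 * ρ ^ 4 / (‖r‖ ^ 2 + ρ ^ 2) ^ 2) * Φ r = 0 :=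
  fisheye_equation_inversion_invariance_general n₀ k ρ hρ a V hV Ψ hΨ hwave Ia hIa Φ hΦ
end

section
/- Let ρ > 0, n ∈ ℕ, and let r, r' ∈ EuclideanSpace ℝ (Fin 3) with r' ≠ 0, r ≠ r' and r ≠ −(ρ²/‖r'‖²)·r'. Set X = −1 + 2ρ²‖r − r'‖²/((‖r‖² + ρ²)(‖r'‖² + ρ²)), θ = arccos X, and A = √((‖r‖² + ρ²)(‖r'‖² + ρ²)) / (‖r − r'‖ · √(‖r‖²‖r'‖² + 2ρ²⟨r, r'⟩ + ρ⁴)). Define H : ℝ → ℝ by H(ν) = −(1/(2n+2)) · (ν − n − 1/2)(ν + n + 3/2) · (1/(4π cos(πν))) · A · sin((ν + 1/2)θ) for ν with cos(πν) ≠ 0, and H(n + 1/2) = (−1)ⁿ · A · sin((n+1)θ)/(4π²). Then H is differentiable at ν = n + 1/2 and its derivative there equals the generalized Green's function value (−1)ⁿ/(4π²) · A · ( cos((n+1)θ) · θ + sin((n+1)θ)/(2(n+1)) ). -/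
/-!
Near `ν₀ = n + 1/2` one has `cos (π ν) = -(-1)ⁿ π (ν - ν₀) sinc (π (ν - ν₀))`, so the factor
`ν - ν₀` in `H` cancels and, on a neighbourhood of `ν₀`, `H` is a smooth function divided by
`sinc (π (ν - ν₀))`. As `sinc 0 = 1` and `sinc' 0 = 0`, the derivative of `H`
at `ν₀` is that of the numerator, `(ν + n + 3/2) sin ((ν + 1/2) θ)` times a constant.
-/

open Real Filter Topology

namespace Real

theorem sin_eq_mul_sinc (x : ℝ) : sin x = x * sinc x := by
  rcases eq_or_ne x 0 with rfl | hx
  · simp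
  · rw [sinc_of_ne_zero hx, mul_div_cancel₀ _ hx]

/-- `sinc x - 1 = O(x²)`, from `|x - sin x| ≤ |x|³ / 6`. -/
theorem hasDerivAt_sinc_zero : HasDerivAt sinc 0 0 := by
  rw [hasDerivAt_iff_tendsto_slope]
  have hbound : Tendsto (fun x : ℝ => |x| / 6) (𝓝[≠] 0) (𝓝 0) :=
    ((continuous_abs.div_const 6).tendsto' 0 0 (by simp)).mono_left nhdsWithin_le_nhds
  refine squeeze_zero_norm' ?_ hbound
  filter_upwards [self_mem_nhdsWithin] with x (hx : x ≠ 0)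
  have hslope : slope sinc 0 x = -(x - sin x) / x ^ 2 := by
    rw [slope_def_field, sinc_of_ne_zero hx, sinc_zero]
    field_simp
    ring
  rw [hslope, norm_div, norm_neg, norm_pow, Real.norm_eq_abs, Real.norm_eq_abs,
    div_le_iff₀ (by positivity)]
  calc |x - sin x| ≤ |x| ^ 3 / 6 := abs_sub_sin_le x
    _ = |x| / 6 * |x| ^ 2 := by ring

theorem cos_pi_mul_eq_neg_one_pow_mul_sinc (n : ℕ) (ν : ℝ) :
    cos (π * ν) = -(-1) ^ n * (π * (ν - (n + 1 / 2))) * sinc (π * (ν - (n + 1 / 2))) := by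
  rw [mul_assoc, ← sin_eq_mul_sinc]
  have hν : π * ν = π * (ν - (n + 1 / 2)) + n * π + π / 2 := by ring
  rw [hν, cos_add_pi_div_two, sin_add_nat_mul_pi]
  ring

theorem eventually_cos_pi_mul_ne_zero (n : ℕ) :
    ∀ᶠ ν in 𝓝[≠] ((n : ℝ) + 1 / 2), cos (π * ν) ≠ 0 := by
  have hsinc : ∀ᶠ ν in 𝓝 ((n : ℝ) + 1 / 2), sinc (π * (ν - (n + 1 / 2))) ≠ 0 :=
    (continuous_sinc.comp (by fun_prop)).continuousAt.eventually_ne (by simp)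
  filter_upwards [nhdsWithin_le_nhds hsinc, self_mem_nhdsWithin] with ν hν (hne : ν ≠ _)
  rw [cos_pi_mul_eq_neg_one_pow_mul_sinc]
  exact mul_ne_zero (mul_ne_zero (by simp) (mul_ne_zero pi_ne_zero (sub_ne_zero.mpr hne))) hν

/-- Also where `sinc` vanishes: both sides are then junk values `x / 0 = 0`. -/
theorem sub_div_cos_pi_mul_eq (n : ℕ) {ν : ℝ} (hν : ν ≠ n + 1 / 2) :
    (ν - (n + 1 / 2)) / cos (π * ν) = -(-1) ^ n / (π * sinc (π * (ν - (n + 1 / 2)))) := by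
  rw [cos_pi_mul_eq_neg_one_pow_mul_sinc n ν]
  generalize hu : ν - (n + 1 / 2) = u
  replace hu : u ≠ 0 := hu ▸ sub_ne_zero.mpr hν
  rcases eq_or_ne (sinc (π * u)) 0 with hsinc | hsinc
  · simp [hsinc]
  · rcases neg_one_pow_eq_or ℝ n with hsign | hsign <;> rw [hsign] <;> field_simp

end Real

theorem HasDerivAt.div_sinc {f : ℝ → ℝ} {f' a : ℝ} (hf : HasDerivAt f f' a) (c : ℝ) :
    HasDerivAt (fun x => f x / sinc (c * (x - a))) f' a := by
  have hsinc : HasDerivAt (fun x => sinc (c * (x - a))) 0 a := by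
    have hlin : HasDerivAt (fun x => c * (x - a)) c a := by
      simpa using ((hasDerivAt_id a).sub_const a).const_mul c
    have h0 : HasDerivAt sinc 0 (c * (a - a)) := by simpa using hasDerivAt_sinc_zero
    simpa [Function.comp_def] using h0.comp a hlin
  simpa using hf.fun_div hsinc (by simp)

/-- `H` with its removable singularity at `ν = n + 1/2` removed: the factor `ν - n - 1/2`
cancels the simple zero of `cos (π ν)`. -/
noncomputable def fisheyeRegularized (n : ℕ) (θ A ν : ℝ) : ℝ :=
  (-1) ^ n * A / (4 * π ^ 2 * (2 * n + 2))
    * ((ν + n + 3 / 2) * sin ((ν + 1 / 2) * θ) / sinc (π * (ν - (n + 1 / 2))))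

section fisheyeRegularized

variable (n : ℕ) (θ A : ℝ)

theorem fisheyeRegularized_eq {ν : ℝ} (hν : ν ≠ n + 1 / 2) :
    -(1 / (2 * (n : ℝ) + 2)) * (ν - n - 1 / 2) * (ν + n + 3 / 2)
        * (1 / (4 * π * cos (π * ν))) * A * sin ((ν + 1 / 2) * θ)
      = fisheyeRegularized n θ A ν := by
  calc _ = -(1 / (2 * n + 2)) / (4 * π) * A * ((ν + n + 3 / 2) * sin ((ν + 1 / 2) * θ))
          * ((ν - (n + 1 / 2)) / cos (π * ν)) := by ring
    _ = fisheyeRegularized n θ A ν := by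
      rw [sub_div_cos_pi_mul_eq n hν, fisheyeRegularized]
      field_simp

theorem fisheyeRegularized_half :
    fisheyeRegularized n θ A (n + 1 / 2) = (-1) ^ n * A * sin ((n + 1) * θ) / (4 * π ^ 2) := by
  rw [fisheyeRegularized, sub_self, mul_zero, sinc_zero,
    show ((n : ℝ) + 1 / 2 + 1 / 2) * θ = (n + 1) * θ by ring]
  field_simp
  ring

theorem hasDerivAt_fisheyeRegularized :
    HasDerivAt (fisheyeRegularized n θ A)
      ((-1) ^ n / (4 * π ^ 2) * A
        * (cos ((n + 1) * θ) * θ + sin ((n + 1) * θ) / (2 * (n + 1)))) (n + 1 / 2) := by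
  have hfactor : HasDerivAt (fun ν : ℝ => ν + n + 3 / 2) 1 (n + 1 / 2) :=
    ((hasDerivAt_id _).add_const _).add_const _
  have harg : HasDerivAt (fun ν : ℝ => (ν + 1 / 2) * θ) θ (n + 1 / 2) := by
    simpa only [id, one_mul] using ((hasDerivAt_id _).add_const (1 / 2)).mul_const θ
  refine (((hfactor.mul harg.sin).div_sinc π).const_mul _).congr_deriv ?_
  rw [show ((n : ℝ) + 1 / 2 + 1 / 2) * θ = (n + 1) * θ by ring]
  field_simp
  ring

end fisheyeRegularized

theorem generalized_fisheye_green_as_derivative_general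
    (n : ℕ)
    (θ A : ℝ)
    (H : ℝ → ℝ)
    (hH : ∀ ν : ℝ, Real.cos (Real.pi * ν) ≠ 0 →
      H ν = -(1 / (2 * (n : ℝ) + 2)) * (ν - n - 1 / 2) * (ν + n + 3 / 2)
          * (1 / (4 * Real.pi * Real.cos (Real.pi * ν))) * A
          * Real.sin ((ν + 1 / 2) * θ))
    (hH' : H ((n : ℝ) + 1 / 2)
      = (-1 : ℝ) ^ n * A * Real.sin (((n : ℝ) + 1) * θ) / (4 * Real.pi ^ 2)) :
    HasDerivAt H
      ((-1 : ℝ) ^ n / (4 * Real.pi ^ 2) * A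
        * (Real.cos (((n : ℝ) + 1) * θ) * θ
            + Real.sin (((n : ℝ) + 1) * θ) / (2 * ((n : ℝ) + 1))))
      ((n : ℝ) + 1 / 2) := by
  have hpunctured : H =ᶠ[𝓝[≠] ((n : ℝ) + 1 / 2)] fisheyeRegularized n θ A := by
    filter_upwards [eventually_cos_pi_mul_ne_zero n, self_mem_nhdsWithin] with ν hcos hν
    rw [hH ν hcos, fisheyeRegularized_eq n θ A hν]
  have hcenter : H (n + 1 / 2) = fisheyeRegularized n θ A (n + 1 / 2) :=
    hH'.trans (fisheyeRegularized_half n θ A).symm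
  exact (hasDerivAt_fisheyeRegularized n θ A).congr_of_eventuallyEq
    (eventuallyEq_nhds_of_eventuallyEq_nhdsNE hpunctured hcenter)

theorem generalized_fisheye_green_as_derivative
    (ρ : ℝ) (hρ : 0 < ρ) (n : ℕ)
    (r r' : EuclideanSpace ℝ (Fin 3)) (hr' : r' ≠ 0) (hne : r ≠ r')
    (him : r ≠ -(ρ ^ 2 / ‖r'‖ ^ 2) • r')
    (X θ A : ℝ)
    (hX : X = -1 + 2 * ρ ^ 2 * ‖r - r'‖ ^ 2
        / ((‖r‖ ^ 2 + ρ ^ 2) * (‖r'‖ ^ 2 + ρ ^ 2)))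
    (hθ : θ = Real.arccos X)
    (hA : A = Real.sqrt ((‖r‖ ^ 2 + ρ ^ 2) * (‖r'‖ ^ 2 + ρ ^ 2))
        / (‖r - r'‖
            * Real.sqrt (‖r‖ ^ 2 * ‖r'‖ ^ 2 + 2 * ρ ^ 2 * (inner ℝ r r' : ℝ) + ρ ^ 4)))
    (H : ℝ → ℝ)
    (hH : ∀ ν : ℝ, Real.cos (Real.pi * ν) ≠ 0 →
      H ν = -(1 / (2 * (n : ℝ) + 2)) * (ν - n - 1 / 2) * (ν + n + 3 / 2)
          * (1 / (4 * Real.pi * Real.cos (Real.pi * ν))) * A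
          * Real.sin ((ν + 1 / 2) * θ))
    (hH' : H ((n : ℝ) + 1 / 2)
      = (-1 : ℝ) ^ n * A * Real.sin (((n : ℝ) + 1) * θ) / (4 * Real.pi ^ 2)) :
    HasDerivAt H
      ((-1 : ℝ) ^ n / (4 * Real.pi ^ 2) * A
        * (Real.cos (((n : ℝ) + 1) * θ) * θ
            + Real.sin (((n : ℝ) + 1) * θ) / (2 * ((n : ℝ) + 1))))
      ((n : ℝ) + 1 / 2) :=
  generalized_fisheye_green_as_derivative_general n θ A H hH hH'
end
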